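/- Every separately continuous function f : ℝ × ℝ → ℝ restricted to the diagonal, g(x) = f(x,x), is a function of the first Baire class on ℝ. -/

import Mathlib

/-!
Interpolate `f (x, ·)` linearly between the nodes `k / N` and evaluate the interpolant at `x`.
On each strip `k ≤ x N ≤ k + 1` this is an affine combination, with coefficients affine in `x`,
of the continuous functions `f (·, k / N)` and `f (·, (k + 1) / N)`, and neighbouring pieces
agree on the common boundary, so the result is continuous. As `N → ∞` the two nodes
bracketing `x` tend to `x`, so continuity of `f (x, ·)` gives convergence to `f (x, x)`.
-/

open Filter Topology Set

theorem locallyFinite_Icc_intCast_add_one :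
    LocallyFinite fun k : ℤ => Icc (k : ℝ) (k + 1) :=
  locallyFinite_Icc_of_tendsto tendsto_intCast_atTop_atTop
    (tendsto_atBot_add_const_right _ 1 (tendsto_intCast_atBot_iff.2 tendsto_id))

theorem continuous_floor_piecewise {X α : Type*} [TopologicalSpace X] [TopologicalSpace α]
    {τ : X → ℝ} (hτ : Continuous τ) {h : ℤ → X → α} (hh : ∀ k, Continuous (h k))
    (hagree : ∀ (k : ℤ) x, τ x = k + 1 → h k x = h (k + 1) x) :
    Continuous fun x => h ⌊τ x⌋ x := by
  refine (locallyFinite_Icc_intCast_add_one.preimage_continuous hτ).continuous ?_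
    (fun k => isClosed_Icc.preimage hτ) fun k => (hh k).continuousOn.congr ?_
  · exact eq_univ_of_forall fun x =>
      mem_iUnion.2 ⟨⌊τ x⌋, Int.floor_le _, (Int.lt_floor_add_one _).le⟩
  · rintro x ⟨hk, hk1⟩
    rcases hk1.lt_or_eq with hlt | heq
    · simp only [Int.floor_eq_iff.2 ⟨hk, hlt⟩]
    · show h ⌊τ x⌋ x = h k x
      rw [hagree k x heq, heq]
      exact_mod_cast congrArg (h · x) (Int.floor_intCast (k + 1))

theorem tendsto_floor_mul_div_atTop {R : Type*} [TopologicalSpace R] [Field R] [LinearOrder R]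
    [IsStrictOrderedRing R] [OrderTopology R] [FloorRing R] (a : R) :
    Tendsto (fun x ↦ (⌊a * x⌋ : R) / x) atTop (𝓝 a) := by
  have hlower : Tendsto (fun x : R ↦ a - x⁻¹) atTop (𝓝 a) := by
    simpa using (tendsto_const_nhds (x := a)).sub tendsto_inv_atTop_zero
  apply tendsto_of_tendsto_of_tendsto_of_le_of_le' hlower tendsto_const_nhds
  · filter_upwards [eventually_gt_atTop 0] with x hx
    rw [le_div_iff₀ hx, sub_mul, inv_mul_cancel₀ hx.ne']
    linarith [Int.lt_floor_add_one (a * x)]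
  · filter_upwards [eventually_gt_atTop 0] with x hx
    exact (div_le_iff₀ hx).2 (Int.floor_le _)

section Interpolation

variable {E : Type*} [NormedAddCommGroup E] [NormedSpace ℝ E]

theorem tendsto_one_sub_smul_add_smul {ι : Type*} {l : Filter ι} {a b : ι → E} {t : ι → ℝ}
    {L : E} (ha : Tendsto a l (𝓝 L)) (hb : Tendsto b l (𝓝 L)) (ht : ∀ i, t i ∈ Icc (0 : ℝ) 1) :
    Tendsto (fun i => (1 - t i) • a i + t i • b i) l (𝓝 L) := by
  have hbdd : IsBoundedUnder (· ≤ ·) l (norm ∘ t) :=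
    isBoundedUnder_of ⟨1, fun i => abs_le.2 ⟨by linarith [(ht i).1], (ht i).2⟩⟩
  have hdiff : Tendsto (fun i => b i - a i) l (𝓝 0) := by simpa using hb.sub ha
  have := ha.add (hbdd.smul_tendsto_zero hdiff)
  simp only [add_zero] at this
  convert this using 2 with i
  simp only [sub_smul, one_smul, smul_sub]
  abel

noncomputable def gridInterpolant (N : ℝ) (φ : ℝ → E) (y : ℝ) : E :=
  (1 - Int.fract (y * N)) • φ (⌊y * N⌋ / N) + Int.fract (y * N) • φ ((⌊y * N⌋ + 1) / N)

theorem continuous_gridInterpolant_diag {f : ℝ × ℝ → E}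
    (hf : ∀ y, Continuous fun x => f (x, y)) (N : ℝ) :
    Continuous fun x => gridInterpolant N (fun y => f (x, y)) x := by
  refine (continuous_floor_piecewise (continuous_mul_const N)
    (h := fun k x => (1 - (x * N - k)) • f (x, k / N) + (x * N - k) • f (x, (k + 1) / N))
    (fun k => ?_) fun k x hx => ?_).congr fun x => ?_
  · have hslope : Continuous fun x : ℝ => x * N - k := by fun_prop
    exact ((continuous_const.sub hslope).smul (hf _)).add (hslope.smul (hf _))
  · simp [hx]
  · simp only [gridInterpolant, Int.fract]

theorem tendsto_gridInterpolant {φ : ℝ → E} {y : ℝ} (hφ : ContinuousAt φ y) :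
    Tendsto (fun N => gridInterpolant N φ y) atTop (𝓝 (φ y)) := by
  have hlow := tendsto_floor_mul_div_atTop y
  have hupp : Tendsto (fun N : ℝ => ((⌊y * N⌋ : ℝ) + 1) / N) atTop (𝓝 y) := by
    simpa [add_div] using hlow.add tendsto_inv_atTop_zero
  exact tendsto_one_sub_smul_add_smul (hφ.tendsto.comp hlow) (hφ.tendsto.comp hupp)
    fun N => ⟨Int.fract_nonneg _, (Int.fract_lt_one _).le⟩

end Interpolation

theorem stmt10 (f : ℝ × ℝ → ℝ)
    (hfx : ∀ x : ℝ, Continuous fun y => f (x, y))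
    (hfy : ∀ y : ℝ, Continuous fun x => f (x, y)) :
    ∃ gs : ℕ → ℝ → ℝ, (∀ n, Continuous (gs n)) ∧
      ∀ x : ℝ, Tendsto (fun n => gs n x) atTop (𝓝 (f (x, x))) :=
  ⟨fun n x => gridInterpolant n (fun y => f (x, y)) x,
    fun n => continuous_gridInterpolant_diag hfy n,
    fun x => (tendsto_gridInterpolant (hfx x).continuousAt).comp tendsto_natCast_atTop_atTop⟩
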